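/- Let (X,d) be a locally compact metric space, Ω ⊆ X an open precompact subset, and μ, ν Radon measures on Ω. Let 1 ≤ p < r < ∞ and suppose there exists C > 0 such that ‖φ‖_{L^r(Ω,μ)} ≤ C‖φ‖_{L^p(Ω,ν)} for every Lipschitz function φ : Ω → ℝ with compact support in Ω. Write the Lebesgue decomposition ν = μ⌊θ + σ, where θ ∈ L^1(Ω,μ) is nonnegative, μ⌊θ(A) = ∫_A θ dμ, and σ is a positive measure singular with respect to μ. Then μ({x ∈ Ω : θ(x) = 0}) = 0. -/

import Mathlib

/-!
Testing the reverse Hölder inequality on the Lipschitz cutoffs `thickenedIndicator δ K` of a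
compact `K ⊆ Ω` and letting `δ → 0` gives `μ(K)^{1/r} ≤ C ν(K)^{1/p}`. By inner regularity of `μ`
this makes `μ⌊Ω` absolutely continuous with respect to `ν⌊Ω`. On `{θ = 0}` the measure `ν⌊Ω`
reduces to `σ`, which is carried by a `μ⌊Ω`-null set, so `{θ = 0}` is `μ⌊Ω`-null.
-/

open MeasureTheory ENNReal NNReal Filter Topology Metric Set

section LpIndicator

variable {α E : Type*} [MeasurableSpace α] [NormedAddCommGroup E] {μ : Measure α}
  {q : ℝ≥0∞} {f : α → E} {s : Set α}

lemma measure_rpow_le_eLpNorm_of_one_le_norm (hs : MeasurableSet s) (hq0 : q ≠ 0)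
    (hq : q ≠ ∞) (hf : ∀ x ∈ s, 1 ≤ ‖f x‖) :
    μ s ^ (1 / q.toReal) ≤ eLpNorm f q μ := by
  have h : eLpNorm (s.indicator fun _ => (1 : ℝ)) q μ ≤ eLpNorm f q μ := by
    refine eLpNorm_mono fun x => ?_
    by_cases hx : x ∈ s
    · simpa [hx] using hf x hx
    · simp [hx]
  simpa [eLpNorm_indicator_const hs hq0 hq] using h

lemma eLpNorm_le_measure_rpow_of_norm_le_indicator (hs : MeasurableSet s) (hq0 : q ≠ 0)
    (hq : q ≠ ∞) (hf : ∀ x, ‖f x‖ ≤ s.indicator 1 x) :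
    eLpNorm f q μ ≤ μ s ^ (1 / q.toReal) := by
  have h : eLpNorm f q μ ≤ eLpNorm (s.indicator fun _ => (1 : ℝ)) q μ :=
    eLpNorm_mono_real fun x => hf x
  simpa [eLpNorm_indicator_const hs hq0 hq] using h

end LpIndicator

section ReverseHolder

variable {X : Type*} [MetricSpace X] [MeasurableSpace X] {μ ν : Measure X} {Ω K : Set X}
  {p r C : ℝ}

def ReverseHolderOn (μ ν : Measure X) (Ω : Set X) (p r C : ℝ) : Prop :=
  ∀ φ : X → ℝ, (∃ K : ℝ≥0, LipschitzWith K φ) →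
    IsCompact (closure (Function.support φ)) →
    closure (Function.support φ) ⊆ Ω →
    eLpNorm φ (ENNReal.ofReal r) (μ.restrict Ω) ≤
      ENNReal.ofReal C * eLpNorm φ (ENNReal.ofReal p) (ν.restrict Ω)

namespace ReverseHolderOn

variable [OpensMeasurableSpace X]

lemma measure_rpow_le_thickening (h : ReverseHolderOn μ ν Ω p r C)
    (hΩ : IsCompact (closure Ω)) (hp : 0 < p) (hr : 0 < r) (hK : IsClosed K) {δ : ℝ}
    (hδ : 0 < δ) (hKΩ : cthickening δ K ⊆ Ω) :
    μ K ^ (1 / r) ≤ ENNReal.ofReal C * ν (thickening δ K) ^ (1 / p) := by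
  set φ : X → ℝ := fun x => thickenedIndicator hδ K x
  have hsupp : Function.support φ ⊆ thickening δ K := fun x hx => by
    by_contra hx'
    exact hx (by simp only [φ, thickenedIndicator_zero hδ K hx', NNReal.coe_zero])
  have hcl : closure (Function.support φ) ⊆ Ω :=
    ((closure_mono hsupp).trans (closure_thickening_subset_cthickening δ K)).trans hKΩ
  have hineq := h φ ⟨_, (LipschitzWith.subtype_val _).comp (lipschitzWith_thickenedIndicator hδ K)⟩
    (hΩ.of_isClosed_subset isClosed_closure (hcl.trans subset_closure)) hcl
  have hμ : μ K ^ (1 / r) ≤ eLpNorm φ (ENNReal.ofReal r) (μ.restrict Ω) := by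
    have hone : ∀ x ∈ K, 1 ≤ ‖φ x‖ := fun x hx => by
      simp only [φ, thickenedIndicator_one hδ K hx, NNReal.coe_one, norm_one, le_rfl]
    have := measure_rpow_le_eLpNorm_of_one_le_norm (μ := μ.restrict Ω) hK.measurableSet
      (ofReal_ne_zero_iff.2 hr) ofReal_ne_top hone
    rwa [toReal_ofReal hr.le, Measure.restrict_eq_self μ (self_subset_cthickening K |>.trans hKΩ)]
      at this
  have hν : eLpNorm φ (ENNReal.ofReal p) (ν.restrict Ω) ≤ ν (thickening δ K) ^ (1 / p) := by
    have hle : ∀ x, ‖φ x‖ ≤ (thickening δ K).indicator 1 x := fun x => by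
      by_cases hx : x ∈ thickening δ K
      · rw [indicator_of_mem hx, Pi.one_apply, Real.norm_of_nonneg (NNReal.coe_nonneg _)]
        exact_mod_cast thickenedIndicator_le_one hδ K x
      · simp only [φ, thickenedIndicator_zero hδ K hx, NNReal.coe_zero, norm_zero,
          indicator_of_notMem hx, le_rfl]
    have := eLpNorm_le_measure_rpow_of_norm_le_indicator (μ := ν.restrict Ω)
      isOpen_thickening.measurableSet (ofReal_ne_zero_iff.2 hp) ofReal_ne_top hle
    rw [toReal_ofReal hp.le] at this
    exact this.trans (rpow_le_rpow (Measure.restrict_apply_le _ _) (by positivity))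
  calc μ K ^ (1 / r) ≤ _ := hμ
    _ ≤ _ := hineq
    _ ≤ _ := by gcongr

lemma measure_rpow_le_of_isCompact [IsFiniteMeasureOnCompacts ν]
    (h : ReverseHolderOn μ ν Ω p r C) (hΩo : IsOpen Ω) (hΩ : IsCompact (closure Ω)) (hp : 0 < p)
    (hr : 0 < r) (hK : IsCompact K) (hKΩ : K ⊆ Ω) :
    μ K ^ (1 / r) ≤ ENNReal.ofReal C * ν K ^ (1 / p) := by
  obtain ⟨δ₀, hδ₀, hδ₀Ω⟩ := hK.exists_cthickening_subset_open hΩo hKΩ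
  have hfin : ν (thickening δ₀ K) ≠ ∞ :=
    ((measure_mono ((thickening_subset_cthickening δ₀ K).trans (hδ₀Ω.trans subset_closure))).trans_lt
      hΩ.measure_lt_top).ne
  have hlim : Tendsto (fun δ => ENNReal.ofReal C * ν (thickening δ K) ^ (1 / p)) (𝓝[>] 0)
      (𝓝 (ENNReal.ofReal C * ν K ^ (1 / p))) := by
    have hν := tendsto_measure_thickening ⟨δ₀, hδ₀, hfin⟩
    rw [hK.isClosed.closure_eq] at hν
    exact ENNReal.Tendsto.const_mul ((ENNReal.continuous_rpow_const.tendsto _).comp hν)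
      (Or.inr ofReal_ne_top)
  refine ge_of_tendsto hlim ?_
  filter_upwards [Ioo_mem_nhdsGT hδ₀] with δ hδ
  exact h.measure_rpow_le_thickening hΩ hp hr hK.isClosed hδ.1
    ((cthickening_mono hδ.2.le K).trans hδ₀Ω)

theorem absolutelyContinuous [Measure.InnerRegularCompactLTTop μ] [IsFiniteMeasureOnCompacts μ]
    [IsFiniteMeasureOnCompacts ν] (h : ReverseHolderOn μ ν Ω p r C) (hΩo : IsOpen Ω)
    (hΩ : IsCompact (closure Ω)) (hp : 0 < p) (hr : 0 < r) :
    μ.restrict Ω ≪ ν.restrict Ω := by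
  refine Measure.AbsolutelyContinuous.mk fun E hE hνE => ?_
  rw [Measure.restrict_apply hE] at hνE ⊢
  have hfin : μ (E ∩ Ω) ≠ ∞ :=
    ((measure_mono (inter_subset_right.trans subset_closure)).trans_lt hΩ.measure_lt_top).ne
  rw [(hE.inter hΩo.measurableSet).measure_eq_iSup_isCompact_of_ne_top hfin]
  simp only [ENNReal.iSup_eq_zero]
  intro K hKE hK
  have hμK := h.measure_rpow_le_of_isCompact hΩo hΩ hp hr hK (hKE.trans inter_subset_right)
  rwa [measure_mono_null hKE hνE, zero_rpow_of_pos (by positivity), mul_zero,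
    nonpos_iff_eq_zero, rpow_eq_zero_iff_of_pos (by positivity)] at hμK

end ReverseHolderOn

end ReverseHolder

theorem reverse_holder_density_positive_general
    {X : Type*} [MetricSpace X]
    [MeasurableSpace X] [BorelSpace X]
    (μ ν : Measure X) [μ.Regular] [ν.Regular]
    (Ω : Set X) (hΩopen : IsOpen Ω) (hΩcpt : IsCompact (closure Ω))
    (p r : ℝ) (hp : 1 ≤ p) (hpr : p < r)
    (C : ℝ)
    (hrh : ∀ φ : X → ℝ, (∃ K : ℝ≥0, LipschitzWith K φ) →
      IsCompact (closure (Function.support φ)) →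
      closure (Function.support φ) ⊆ Ω →
      eLpNorm φ (ENNReal.ofReal r) (μ.restrict Ω) ≤
        ENNReal.ofReal C * eLpNorm φ (ENNReal.ofReal p) (ν.restrict Ω))
    (θ : X → ℝ) (hθmeas : Measurable θ)
    (σ : Measure X)
    (hsing : σ ⟂ₘ μ.restrict Ω)
    (hdecomp : ν.restrict Ω =
      (μ.restrict Ω).withDensity (fun x => ENNReal.ofReal (θ x)) + σ) :
    (μ.restrict Ω) {x | θ x = 0} = 0 := by
  have hac : μ.restrict Ω ≪ ν.restrict Ω :=
    ReverseHolderOn.absolutelyContinuous hrh hΩopen hΩcpt (by linarith) (by linarith)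
  obtain ⟨s, -, hσs, hμs⟩ := hsing
  rw [← measure_inter_conull (s := {x | θ x = 0}) hμs]
  refine hac ?_
  rw [hdecomp, Measure.add_apply, measure_mono_null inter_subset_right hσs, add_zero,
    withDensity_apply_eq_zero (by fun_prop)]
  exact measure_mono_null (fun x ⟨hx, hx0, _⟩ => hx (by rw [show θ x = 0 from hx0, ofReal_zero]))
    measure_empty

/-- Step 2 of Lemma 3.1: with the reverse Hölder hypothesis
`‖φ‖_{L^r(Ω,μ)} ≤ C ‖φ‖_{L^p(Ω,ν)}` for all Lipschitz `φ` compactly supported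
in the precompact open `Ω`, and a Lebesgue decomposition `ν = μ⌊θ + σ` on `Ω`
with `σ ⟂ μ`, the set `{θ = 0}` is `μ`-null in `Ω`. -/
theorem reverse_holder_density_positive
    {X : Type*} [MetricSpace X] [LocallyCompactSpace X]
    [MeasurableSpace X] [BorelSpace X]
    (μ ν : Measure X) [μ.Regular] [ν.Regular]
    (Ω : Set X) (hΩopen : IsOpen Ω) (hΩcpt : IsCompact (closure Ω))
    (p r : ℝ) (hp : 1 ≤ p) (hpr : p < r)
    (C : ℝ) (hC : 0 < C)
    (hrh : ∀ φ : X → ℝ, (∃ K : ℝ≥0, LipschitzWith K φ) →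
      IsCompact (closure (Function.support φ)) →
      closure (Function.support φ) ⊆ Ω →
      eLpNorm φ (ENNReal.ofReal r) (μ.restrict Ω) ≤
        ENNReal.ofReal C * eLpNorm φ (ENNReal.ofReal p) (ν.restrict Ω))
    (θ : X → ℝ) (hθ0 : ∀ x, 0 ≤ θ x) (hθmeas : Measurable θ)
    (hθint : Integrable θ (μ.restrict Ω))
    (σ : Measure X)
    (hsing : σ ⟂ₘ μ.restrict Ω)
    (hdecomp : ν.restrict Ω =
      (μ.restrict Ω).withDensity (fun x => ENNReal.ofReal (θ x)) + σ) :
    (μ.restrict Ω) {x | θ x = 0} = 0 :=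
  reverse_holder_density_positive_general μ ν Ω hΩopen hΩcpt p r hp hpr C hrh θ hθmeas σ hsing
    hdecomp
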